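/- For k = 1, 2 let (τ_{U,k}, φ_{U,k}, τ_{ε,k}) be real parameters with τ_{U,k} > 0, τ_{ε,k} > 0, and |φ_{U,k}| < 1, and define v_k : ℕ → ℝ by v_k(0) = τ_{U,k}⁻¹/(2√(1−φ_{U,k}²)) + τ_{ε,k}⁻¹ and v_k(l) = τ_{U,k}⁻¹·(1/(2√(1−φ_{U,k}²)))·(φ_{U,k}/(1+√(1−φ_{U,k}²)))^l for l ≥ 1. Then: (a) v_k(l) = 0 for all integers l ≥ 1 if and only if φ_{U,k} = 0; and (b) if φ_{U,1} ≠ 0, φ_{U,2} ≠ 0, and v_1(l) = v_2(l) for all l ∈ ℕ, then τ_{U,1} = τ_{U,2}, φ_{U,1} = φ_{U,2}, and τ_{ε,1} = τ_{ε,2}. -/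

import Mathlib

/-- The limiting value, as ring size `n → ∞`, of the entries at lag `l = |i - j|` of the
conditional covariance `Var[Y | Z] = τ_U⁻¹ • A_n(φ_U)⁻¹ + τ_ε⁻¹ • I_n` on the ring graph. -/
noncomputable def lagCov (τU τε φU : ℝ) : ℕ → ℝ := fun l =>
  if l = 0 then
    τU⁻¹ / (2 * Real.sqrt (1 - φU ^ 2)) + τε⁻¹
  else
    τU⁻¹ * (1 / (2 * Real.sqrt (1 - φU ^ 2))) *
      (φU / (1 + Real.sqrt (1 - φU ^ 2))) ^ l

/-!
For `l ≥ 1` the lag function is a geometric sequence `a · rˡ` with scale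
`a = τ_U⁻¹ / (2√(1-φ²)) > 0` and ratio `r = φ / (1 + √(1-φ²))`, which vanishes exactly when
`φ = 0`. When `r ≠ 0` the lags `1` and `2` determine `a` and `r`; the ratio determines `φ`
through `φ = 2r / (1 + r²)`, then `a` determines `τ_U`, and the lag `0` finally gives `τ_ε`.
-/

lemma eq_and_eq_of_mul_eq_mul_of_mul_sq_eq {K : Type*} [CommGroupWithZero K] {a b r q : K}
    (har : a * r ≠ 0) (h₁ : a * r = b * q) (h₂ : a * r ^ 2 = b * q ^ 2) : a = b ∧ r = q := by
  have hr : r = q := by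
    refine mul_left_cancel₀ har ?_
    calc a * r * r = a * r ^ 2 := by rw [mul_assoc, ← sq]
      _ = b * q ^ 2 := h₂
      _ = b * q * q := by rw [mul_assoc, ← sq]
      _ = a * r * q := by rw [h₁]
  subst hr
  exact ⟨mul_right_cancel₀ (right_ne_zero_of_mul har) h₁, rfl⟩

noncomputable def lagScale (τU φU : ℝ) : ℝ := τU⁻¹ * (1 / (2 * Real.sqrt (1 - φU ^ 2)))

noncomputable def lagRatio (φU : ℝ) : ℝ := φU / (1 + Real.sqrt (1 - φU ^ 2))

lemma lagCov_zero (τU τε φU : ℝ) : lagCov τU τε φU 0 = lagScale τU φU + τε⁻¹ := by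
  rw [lagCov, if_pos rfl, lagScale, mul_one_div]

lemma lagCov_of_ne_zero (τU τε φU : ℝ) {l : ℕ} (hl : l ≠ 0) :
    lagCov τU τε φU l = lagScale τU φU * lagRatio φU ^ l := by
  simp only [lagCov, lagScale, lagRatio, if_neg hl]

lemma lagScale_ne_zero {τU φU : ℝ} (hτU : τU ≠ 0) (hφU : |φU| < 1) : lagScale τU φU ≠ 0 := by
  have hs : 0 < Real.sqrt (1 - φU ^ 2) :=
    Real.sqrt_pos.2 (sub_pos.2 ((sq_lt_one_iff_abs_lt_one φU).2 hφU))
  unfold lagScale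
  positivity

lemma lagScale_left_injective {φU : ℝ} (hφU : |φU| < 1) :
    Function.Injective (lagScale · φU) := by
  intro τ₁ τ₂ h
  have hc : 1 / (2 * Real.sqrt (1 - φU ^ 2)) ≠ 0 := by
    simpa [lagScale] using lagScale_ne_zero one_ne_zero hφU
  exact inv_injective (mul_right_cancel₀ hc h)

lemma lagRatio_eq_zero_iff (φU : ℝ) : lagRatio φU = 0 ↔ φU = 0 := by
  have : 1 + Real.sqrt (1 - φU ^ 2) ≠ 0 := by positivity
  simp [lagRatio, this]

/-- With `φ = sin θ`, `lagRatio φ = tan (θ / 2)`: this is the double-angle formula for `sin`. -/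
lemma two_mul_lagRatio_div {φU : ℝ} (hφU : |φU| ≤ 1) :
    2 * lagRatio φU / (1 + lagRatio φU ^ 2) = φU := by
  have hsq : Real.sqrt (1 - φU ^ 2) ^ 2 = 1 - φU ^ 2 :=
    Real.sq_sqrt (sub_nonneg.2 ((sq_le_one_iff_abs_le_one φU).2 hφU))
  have h₁ : 1 + Real.sqrt (1 - φU ^ 2) ≠ 0 := by positivity
  have h₂ : 1 + lagRatio φU ^ 2 ≠ 0 := by positivity
  rw [div_eq_iff h₂, lagRatio]
  field_simp
  linear_combination (-φU) * hsq

lemma lagRatio_injOn : Set.InjOn lagRatio {φU | |φU| ≤ 1} := fun φ₁ h₁ φ₂ h₂ h => by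
  rw [← two_mul_lagRatio_div h₁, ← two_mul_lagRatio_div h₂, h]

lemma forall_lagCov_eq_zero_iff {τU φU : ℝ} (τε : ℝ) (hτU : τU ≠ 0) (hφU : |φU| < 1) :
    (∀ l : ℕ, 1 ≤ l → lagCov τU τε φU l = 0) ↔ φU = 0 := by
  simp only [Nat.one_le_iff_ne_zero]
  constructor
  · intro h
    have h₁ := h 1 one_ne_zero
    rw [lagCov_of_ne_zero _ _ _ one_ne_zero, pow_one] at h₁
    exact (lagRatio_eq_zero_iff φU).1 ((mul_eq_zero.1 h₁).resolve_left (lagScale_ne_zero hτU hφU))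
  · rintro rfl l hl
    rw [lagCov_of_ne_zero _ _ _ hl, (lagRatio_eq_zero_iff 0).2 rfl, zero_pow hl, mul_zero]

lemma eq_of_lagCov_eq {τU₁ φU₁ τε₁ τU₂ φU₂ τε₂ : ℝ}
    (hτU₁ : τU₁ ≠ 0) (hφU₁ : |φU₁| < 1) (hφU₂ : |φU₂| < 1) (hφ₁ : φU₁ ≠ 0)
    (h : ∀ l : ℕ, lagCov τU₁ τε₁ φU₁ l = lagCov τU₂ τε₂ φU₂ l) :
    τU₁ = τU₂ ∧ φU₁ = φU₂ ∧ τε₁ = τε₂ := by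
  have h₁ := h 1
  have h₂ := h 2
  simp only [lagCov_of_ne_zero _ _ _ one_ne_zero, lagCov_of_ne_zero _ _ _ two_ne_zero,
    pow_one] at h₁ h₂
  have hne : lagScale τU₁ φU₁ * lagRatio φU₁ ≠ 0 :=
    mul_ne_zero (lagScale_ne_zero hτU₁ hφU₁) (mt (lagRatio_eq_zero_iff φU₁).1 hφ₁)
  obtain ⟨hscale, hratio⟩ := eq_and_eq_of_mul_eq_mul_of_mul_sq_eq hne h₁ h₂
  have hφ : φU₁ = φU₂ := lagRatio_injOn hφU₁.le hφU₂.le hratio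
  subst hφ
  have hτU : τU₁ = τU₂ := lagScale_left_injective hφU₁ hscale
  subst hτU
  have h₀ := h 0
  rw [lagCov_zero, lagCov_zero, add_right_inj] at h₀
  exact ⟨rfl, rfl, inv_injective h₀⟩

theorem variance_parameters_identified_general
    (τU1 φU1 τε1 τU2 φU2 τε2 : ℝ)
    (hτU1 : 0 < τU1) (hφU1 : |φU1| < 1)
    (hτU2 : 0 < τU2) (hφU2 : |φU2| < 1) :
    ((∀ l : ℕ, 1 ≤ l → lagCov τU1 τε1 φU1 l = 0) ↔ φU1 = 0) ∧
    ((∀ l : ℕ, 1 ≤ l → lagCov τU2 τε2 φU2 l = 0) ↔ φU2 = 0) ∧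
    (φU1 ≠ 0 → φU2 ≠ 0 → (∀ l : ℕ, lagCov τU1 τε1 φU1 l = lagCov τU2 τε2 φU2 l) →
      τU1 = τU2 ∧ φU1 = φU2 ∧ τε1 = τε2) :=
  ⟨forall_lagCov_eq_zero_iff τε1 hτU1.ne' hφU1, forall_lagCov_eq_zero_iff τε2 hτU2.ne' hφU2,
    fun hφ₁ _ h => eq_of_lagCov_eq hτU1.ne' hφU1 hφU2 hφ₁ h⟩

/-- Variance-parameter identification steps of Theorem 2: (a) the off-diagonal limiting
covariances vanish iff `φ_U = 0`; (b) if `φ_U ≠ 0`, then `(τ_U, φ_U, τ_ε)` are identified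
by the limiting covariance lag function. -/
theorem variance_parameters_identified
    (τU1 φU1 τε1 τU2 φU2 τε2 : ℝ)
    (hτU1 : 0 < τU1) (hτε1 : 0 < τε1) (hφU1 : |φU1| < 1)
    (hτU2 : 0 < τU2) (hτε2 : 0 < τε2) (hφU2 : |φU2| < 1) :
    ((∀ l : ℕ, 1 ≤ l → lagCov τU1 τε1 φU1 l = 0) ↔ φU1 = 0) ∧
    ((∀ l : ℕ, 1 ≤ l → lagCov τU2 τε2 φU2 l = 0) ↔ φU2 = 0) ∧
    (φU1 ≠ 0 → φU2 ≠ 0 → (∀ l : ℕ, lagCov τU1 τε1 φU1 l = lagCov τU2 τε2 φU2 l) →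
      τU1 = τU2 ∧ φU1 = φU2 ∧ τε1 = τε2) :=
  variance_parameters_identified_general τU1 φU1 τε1 τU2 φU2 τε2 hτU1 hφU1 hτU2 hφU2
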